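/- arXiv:1708.02650 — 5 statements merged into one kernel-verified Lean document; each statement's English description precedes it below -/
import Mathlib

section
/- Let k be a field, n ≥ 1, and B, C associative unital k-algebras. Let ι_B : Mat_n(k) → Mat_n(B) and ι_C : Mat_n(k) → Mat_n(C) be the canonical unital k-algebra maps (entrywise via k → B, k → C). Then every unital k-algebra homomorphism F : Mat_n(B) → Mat_n(C) satisfying F ∘ ι_B = ι_C is of the form F = Mat_n(g) (g applied entrywise) for a unique unital k-algebra homomorphism g : B → C. In other words, B ↦ Mat_n(B) is a fully faithful functor from k-algebras to k-algebras under Mat_n(k). -/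
/-!
Since `F` fixes the matrix units `E i j` of `Mat_n(k)`, it maps the corner
`E i₀ i₀ Mat_n(B) E i₀ i₀ ≅ B` into the corner `E i₀ i₀ Mat_n(C) E i₀ i₀ ≅ C`; this gives `g`.
As `b E i j = E i i₀ (b E i₀ i₀) E i₀ j`, `F` then agrees with `Mat_n(g)` on every `b E i j`,
and these span `Mat_n(B)`. Uniqueness holds because `g` can be read off from `Mat_n(g)` in the
corner.
-/

open Matrix

namespace AlgHom

variable {R A B ι : Type*} [CommSemiring R] [Semiring A] [Algebra R A] [Semiring B] [Algebra R B]
  [Fintype ι] [DecidableEq ι]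

theorem mapMatrix_injective [Nonempty ι] :
    Function.Injective (mapMatrix : (A →ₐ[R] B) → Matrix ι ι A →ₐ[R] Matrix ι ι B) := by
  intro g g' h
  ext a
  obtain ⟨i⟩ := ‹Nonempty ι›
  simpa using congr($h (single i i a) i i)

variable (F : Matrix ι ι A →ₐ[R] Matrix ι ι B)

theorem map_single_algebraMap_of_comp_mapMatrix
    (hF : F.comp (Algebra.ofId R A).mapMatrix = (Algebra.ofId R B).mapMatrix) (i j : ι) (r : R) :
    F (single i j (algebraMap R A r)) = single i j (algebraMap R B r) := by
  simpa using congr($hF (single i j r))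

theorem map_single_of_comp_mapMatrix
    (hF : F.comp (Algebra.ofId R A).mapMatrix = (Algebra.ofId R B).mapMatrix) (i₀ i j : ι) (a : A) :
    F (single i j a) = single i j (F (single i₀ i₀ a) i₀ i₀) := by
  have hE : ∀ i j : ι, F (single i j 1) = single i j 1 := fun i j => by
    simpa using map_single_algebraMap_of_comp_mapMatrix F hF i j 1
  have hfactor : single i j a = single i i₀ 1 * single i₀ i₀ a * single i₀ j 1 := by
    simp
  rw [hfactor, map_mul, map_mul, hE, hE, single_mul_mul_single, one_mul, mul_one]

def cornerHom
    (hF : F.comp (Algebra.ofId R A).mapMatrix = (Algebra.ofId R B).mapMatrix) (i₀ : ι) :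
    A →ₐ[R] B where
  toFun a := F (single i₀ i₀ a) i₀ i₀
  map_one' := by
    simpa using congr($(map_single_algebraMap_of_comp_mapMatrix F hF i₀ i₀ 1) i₀ i₀)
  map_mul' x y := by
    conv_lhs => rw [← single_mul_single_same (c := x) i₀ i₀ i₀ y, map_mul,
      map_single_of_comp_mapMatrix F hF i₀ i₀ i₀ x, map_single_of_comp_mapMatrix F hF i₀ i₀ i₀ y,
      single_mul_single_same, single_apply_same]
  map_zero' := by simp
  map_add' x y := by rw [single_add, map_add, Matrix.add_apply]
  commutes' r := by
    simpa using congr($(map_single_algebraMap_of_comp_mapMatrix F hF i₀ i₀ r) i₀ i₀)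

theorem eq_mapMatrix_cornerHom
    (hF : F.comp (Algebra.ofId R A).mapMatrix = (Algebra.ofId R B).mapMatrix) (i₀ : ι) :
    F = (cornerHom F hF i₀).mapMatrix := by
  ext1 M
  induction M using Matrix.induction_on' with
  | h_zero => simp
  | h_add p q hp hq => rw [map_add, map_add, hp, hq]
  | h_std_basis i j a =>
    rw [map_single_of_comp_mapMatrix F hF i₀ i j a, mapMatrix_apply, map_single]
    rfl

end AlgHom

theorem matrix_algebra_fully_faithful
    (k : Type*) [Field k] (n : ℕ) (hn : 1 ≤ n)
    (B C : Type*) [Ring B] [Algebra k B] [Ring C] [Algebra k C]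
    (F : Matrix (Fin n) (Fin n) B →ₐ[k] Matrix (Fin n) (Fin n) C)
    (hF : F.comp (AlgHom.mapMatrix (Algebra.ofId k B))
        = AlgHom.mapMatrix (Algebra.ofId k C)) :
    ∃! g : B →ₐ[k] C, F = AlgHom.mapMatrix g := by
  let i₀ : Fin n := ⟨0, hn⟩
  have : Nonempty (Fin n) := ⟨i₀⟩
  have hF_eq := AlgHom.eq_mapMatrix_cornerHom F hF i₀
  exact ⟨_, hF_eq, fun g hg => AlgHom.mapMatrix_injective (hg.symm.trans hF_eq)⟩
end

section
/- Let k be a field, A an associative unital k-algebra, and n ≥ 1. There exist an associative unital k-algebra √A and a k-algebra homomorphism j : A → Mat_n(√A) such that for every associative unital k-algebra B, the map g ↦ Mat_n(g) ∘ j is a bijection from the set of unital k-algebra homomorphisms √A → B onto the set of unital k-algebra homomorphisms A → Mat_n(B). That is, the functor B ↦ Hom_{Alg_k}(A, Mat_n(B)) on associative k-algebras is representable, with representing object √A (the matrix reduction of A). -/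
/-!
Instead of the centralizer of `Mat_n(k)` in `A ∗ Mat_n(k)`, present `√A` by generators and
relations: one generator `a_{ij}` for each `a ∈ A` and each pair of indices, subject exactly to
the relations saying that `a ↦ (a_{ij})` is a unital `k`-algebra map into matrices. An algebra
map `A → Mat_n(B)` then is the same thing as an assignment of the generators satisfying the
relations, i.e. an algebra map out of the quotient of the free algebra.
-/

universe u

/-- A bundled associative unital `k`-algebra. -/
structure AlgPkg (k : Type u) [Field k] : Type (u + 1) where
  carrier : Type u
  [ringInst : Ring carrier]
  [algInst : Algebra k carrier]

attribute [instance] AlgPkg.ringInst AlgPkg.algInst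

namespace MatrixReduction

variable (k : Type*) [CommSemiring k] (A : Type*) [Semiring A] [Algebra k A]
  (ι : Type*) [Fintype ι] [DecidableEq ι]

inductive Rel : FreeAlgebra k (A × ι × ι) → FreeAlgebra k (A × ι × ι) → Prop
  | one (i j : ι) : Rel (FreeAlgebra.ι k (1, i, j)) (if i = j then 1 else 0)
  | add (a b : A) (i j : ι) :
      Rel (FreeAlgebra.ι k (a + b, i, j)) (FreeAlgebra.ι k (a, i, j) + FreeAlgebra.ι k (b, i, j))
  | smul (c : k) (a : A) (i j : ι) :
      Rel (FreeAlgebra.ι k (c • a, i, j)) (c • FreeAlgebra.ι k (a, i, j))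
  | mul (a b : A) (i j : ι) :
      Rel (FreeAlgebra.ι k (a * b, i, j))
        (∑ l, FreeAlgebra.ι k (a, i, l) * FreeAlgebra.ι k (b, l, j))

end MatrixReduction

/-- The matrix reduction `√A`, for matrices indexed by `ι`. -/
abbrev MatrixReduction (k : Type*) [CommSemiring k] (A : Type*) [Semiring A] [Algebra k A]
    (ι : Type*) [Fintype ι] [DecidableEq ι] : Type _ :=
  RingQuot (MatrixReduction.Rel k A ι)

namespace MatrixReduction

variable (k : Type*) [CommSemiring k] (A : Type*) [Semiring A] [Algebra k A]
  (ι : Type*) [Fintype ι] [DecidableEq ι]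

/-- The generator `a_{ij}` of `√A`. -/
def entry (a : A) (i j : ι) : MatrixReduction k A ι :=
  RingQuot.mkAlgHom k (Rel k A ι) (FreeAlgebra.ι k (a, i, j))

variable {k A ι}

theorem entry_one (i j : ι) : entry k A ι 1 i j = if i = j then 1 else 0 := by
  simpa [entry, apply_ite] using RingQuot.mkAlgHom_rel k (Rel.one (k := k) (A := A) i j)

theorem entry_add (a b : A) (i j : ι) :
    entry k A ι (a + b) i j = entry k A ι a i j + entry k A ι b i j := by
  simpa [entry] using RingQuot.mkAlgHom_rel k (Rel.add (k := k) a b i j)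

theorem entry_smul (c : k) (a : A) (i j : ι) :
    entry k A ι (c • a) i j = c • entry k A ι a i j := by
  simpa [entry] using RingQuot.mkAlgHom_rel k (Rel.smul c a i j)

theorem entry_mul (a b : A) (i j : ι) :
    entry k A ι (a * b) i j = ∑ l, entry k A ι a i l * entry k A ι b l j := by
  simpa [entry] using RingQuot.mkAlgHom_rel k (Rel.mul (k := k) a b i j)

theorem entry_zero (i j : ι) : entry k A ι 0 i j = 0 := by
  simpa using entry_smul (0 : k) (0 : A) i j

variable (k A ι)

/-- The universal map `j : A → Mat_ι(√A)`, `a ↦ (a_{ij})`. -/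
def toMatrix : A →ₐ[k] Matrix ι ι (MatrixReduction k A ι) where
  toFun a := Matrix.of (entry k A ι a)
  map_one' := by ext i j; simp [Matrix.one_apply, entry_one]
  map_mul' a b := by ext i j; simp [Matrix.mul_apply, entry_mul]
  map_zero' := by ext i j; simp [entry_zero]
  map_add' a b := by ext i j; simp [entry_add]
  commutes' c := by
    ext i j
    rw [Algebra.algebraMap_eq_smul_one c]
    by_cases hij : i = j <;> simp [hij, entry_smul, entry_one, Algebra.algebraMap_eq_smul_one]

variable {k A ι}

@[simp]
theorem toMatrix_apply (a : A) (i j : ι) : toMatrix k A ι a i j = entry k A ι a i j := rfl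

variable {B : Type*} [Semiring B] [Algebra k B]

theorem hom_ext {g₁ g₂ : MatrixReduction k A ι →ₐ[k] B}
    (h : ∀ a i j, g₁ (entry k A ι a i j) = g₂ (entry k A ι a i j)) : g₁ = g₂ :=
  RingQuot.ringQuot_ext' _ _ _ <| FreeAlgebra.hom_ext <| funext fun ⟨a, i, j⟩ => h a i j

def lift (f : A →ₐ[k] Matrix ι ι B) : MatrixReduction k A ι →ₐ[k] B :=
  RingQuot.liftAlgHom k ⟨FreeAlgebra.lift k fun x => f x.1 x.2.1 x.2.2, by
    intro x y h
    induction h with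
    | one i j => by_cases hij : i = j <;> simp [hij]
    | add a b i j => simp
    | smul c a i j => simp
    | mul a b i j => simp [Matrix.mul_apply]⟩

@[simp]
theorem lift_entry (f : A →ₐ[k] Matrix ι ι B) (a : A) (i j : ι) :
    lift f (entry k A ι a i j) = f a i j := by
  simp [lift, entry, RingQuot.liftAlgHom_mkAlgHom_apply]

theorem mapMatrix_lift_comp_toMatrix (f : A →ₐ[k] Matrix ι ι B) :
    (lift f).mapMatrix.comp (toMatrix k A ι) = f := by
  ext a i j
  simp

theorem lift_mapMatrix_comp_toMatrix (g : MatrixReduction k A ι →ₐ[k] B) :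
    lift (g.mapMatrix.comp (toMatrix k A ι)) = g :=
  hom_ext fun a i j => by simp

variable (k A ι B)

def homEquiv : (MatrixReduction k A ι →ₐ[k] B) ≃ (A →ₐ[k] Matrix ι ι B) where
  toFun g := g.mapMatrix.comp (toMatrix k A ι)
  invFun := lift
  left_inv := lift_mapMatrix_comp_toMatrix
  right_inv := mapMatrix_lift_comp_toMatrix

end MatrixReduction

theorem matrix_reduction_representable_general
    (k : Type u) [Field k] (A : Type u) [Ring A] [Algebra k A]
    (n : ℕ) :
    ∃ (R : AlgPkg k) (j : A →ₐ[k] Matrix (Fin n) (Fin n) R.carrier),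
      ∀ (B : Type u) [Ring B] [Algebra k B],
        Function.Bijective
          (fun g : R.carrier →ₐ[k] B => (AlgHom.mapMatrix g).comp j) :=
  ⟨⟨MatrixReduction k A (Fin n)⟩, MatrixReduction.toMatrix k A (Fin n),
    fun B _ _ => (MatrixReduction.homEquiv k A (Fin n) B).bijective⟩

theorem matrix_reduction_representable
    (k : Type u) [Field k] (A : Type u) [Ring A] [Algebra k A]
    (n : ℕ) (hn : 1 ≤ n) :
    ∃ (R : AlgPkg k) (j : A →ₐ[k] Matrix (Fin n) (Fin n) R.carrier),
      ∀ (B : Type u) [Ring B] [Algebra k B],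
        Function.Bijective
          (fun g : R.carrier →ₐ[k] B => (AlgHom.mapMatrix g).comp j) :=
  matrix_reduction_representable_general k A n
end

section
/- Let k be a field, A an associative unital k-algebra, and n ≥ 1. There exist a commutative unital k-algebra A_V and a k-algebra homomorphism π : A → Mat_n(A_V) such that for every commutative unital k-algebra B, the map φ ↦ Mat_n(φ) ∘ π is a bijection from the set of k-algebra homomorphisms A_V → B onto the set of unital k-algebra homomorphisms A → Mat_n(B). That is, the representation functor Rep_V A : CommAlg_k → Sets, B ↦ Hom_{Alg_k}(A, Mat_n(B)), is representable, with representing object the coordinate ring A_V = k[Rep(A, V)] of the scheme of n-dimensional representations of A, and π is the universal representation. -/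
/-!
STATEMENT 8: The representation functor `Rep_V A : CommAlg_k → Sets`,
`B ↦ Hom_{Alg_k}(A, Mat_n(B))`, is representable by a commutative `k`-algebra `A_V`
together with the universal representation `π : A → Mat_n(A_V)`.
-/

universe u

/-- A bundled commutative unital `k`-algebra. -/
structure CommAlgPkg (k : Type u) [Field k] : Type (u + 1) where
  carrier : Type u
  [ringInst : CommRing carrier]
  [algInst : Algebra k carrier]

attribute [instance] CommAlgPkg.ringInst CommAlgPkg.algInst

/-!
`A_V` is presented by generators and relations: one variable `X (a, i, j)` for each entry of
the matrix representing each `a : A`, subject to the entries of the matrix identities saying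
that the generic matrix `a ↦ (X (a, i, j))ᵢⱼ` is a unital `k`-algebra homomorphism. A
representation `ψ : A → Mat_n(B)` is then the same as a `k`-algebra map `A_V → B`, namely
`X (a, i, j) ↦ ψ a i j`. (The paper builds `A_V` as the abelianization of the centralizer of
`Mat_n(k)` in `A ∗ Mat_n(k)`; both represent the same functor, so they are isomorphic.)
-/

noncomputable section

open MvPolynomial

namespace RepresentationScheme

variable (k : Type*) [CommRing k] (A : Type*) [Semiring A] [Algebra k A]
  (m : Type*) [Fintype m] [DecidableEq m]

def genericMatrix (a : A) : Matrix m m (MvPolynomial (A × m × m) k) :=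
  Matrix.of fun i j => X (a, i, j)

def relations : Set (Matrix m m (MvPolynomial (A × m × m) k)) :=
  {genericMatrix k A m 1 - 1} ∪
  Set.range (fun p : A × A =>
    genericMatrix k A m (p.1 + p.2) - genericMatrix k A m p.1 - genericMatrix k A m p.2) ∪
  Set.range (fun p : k × A => genericMatrix k A m (p.1 • p.2) - p.1 • genericMatrix k A m p.2) ∪
  Set.range (fun p : A × A =>
    genericMatrix k A m (p.1 * p.2) - genericMatrix k A m p.1 * genericMatrix k A m p.2)

def ideal : Ideal (MvPolynomial (A × m × m) k) :=
  Ideal.span {p | ∃ M ∈ relations k A m, ∃ i j, p = M i j}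

/-- The coordinate ring `A_V` of the scheme of `m`-dimensional representations of `A`. -/
abbrev CoordRing : Type _ := MvPolynomial (A × m × m) k ⧸ ideal k A m

variable {k A m}

theorem ideal_le_ker_iff {S : Type*} [CommRing S] [Algebra k S]
    (f : MvPolynomial (A × m × m) k →ₐ[k] S) :
    ideal k A m ≤ RingHom.ker f ↔ ∀ M ∈ relations k A m, f.mapMatrix M = 0 := by
  simp only [ideal, Ideal.span_le, Set.ofPred_subset, SetLike.mem_coe, RingHom.mem_ker]
  constructor
  · intro h M hM
    ext i j
    exact h _ ⟨M, hM, i, j, rfl⟩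
  · rintro h _ ⟨M, hM, i, j, rfl⟩
    exact congrFun₂ (h M hM) i j

def representationOf {S : Type*} [CommRing S] [Algebra k S]
    (f : MvPolynomial (A × m × m) k →ₐ[k] S) (hf : ∀ M ∈ relations k A m, f.mapMatrix M = 0) :
    A →ₐ[k] Matrix m m S :=
  AlgHom.ofLinearMap
    { toFun a := f.mapMatrix (genericMatrix k A m a)
      map_add' a b := by
        have h := hf _ (Or.inl <| Or.inl <| Or.inr ⟨(a, b), rfl⟩)
        rwa [map_sub, map_sub, sub_sub, sub_eq_zero] at h
      map_smul' c a := by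
        have h := hf _ (Or.inl <| Or.inr ⟨(c, a), rfl⟩)
        rwa [map_sub, map_smul, sub_eq_zero] at h }
    (by
      have h := hf _ (Or.inl <| Or.inl <| Or.inl rfl)
      rwa [map_sub, map_one, sub_eq_zero] at h)
    (fun a b => by
      have h := hf _ (Or.inr ⟨(a, b), rfl⟩)
      rwa [map_sub, map_mul, sub_eq_zero] at h)

variable (k A m) in
def universalRep : A →ₐ[k] Matrix m m (CoordRing k A m) :=
  representationOf (Ideal.Quotient.mkₐ k (ideal k A m))
    ((ideal_le_ker_iff _).mp (Ideal.Quotient.mkₐ_ker k _).ge)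

theorem mapMatrix_aeval_genericMatrix {B : Type*} [CommRing B] [Algebra k B]
    (ψ : A →ₐ[k] Matrix m m B) (a : A) :
    (aeval fun x : A × m × m => ψ x.1 x.2.1 x.2.2).mapMatrix (genericMatrix k A m a) = ψ a := by
  ext i j
  simp [genericMatrix]

theorem mapMatrix_aeval_eq_zero_of_mem_relations {B : Type*} [CommRing B] [Algebra k B] (ψ : A →ₐ[k] Matrix m m B) :
    ∀ M ∈ relations k A m, (aeval fun x : A × m × m => ψ x.1 x.2.1 x.2.2).mapMatrix M = 0 := by
  rintro _ (((rfl | ⟨⟨a, b⟩, rfl⟩) | ⟨⟨c, a⟩, rfl⟩) | ⟨⟨a, b⟩, rfl⟩) <;>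
    simp only [map_sub, map_one, map_mul, map_smul, mapMatrix_aeval_genericMatrix, map_add,
      sub_sub, sub_self]

theorem mapMatrix_universalRep_apply {B : Type*} [CommRing B] [Algebra k B]
    (φ : CoordRing k A m →ₐ[k] B) (a : A) (i j : m) :
    φ.mapMatrix (universalRep k A m a) i j = φ (Ideal.Quotient.mk _ (X (a, i, j))) :=
  rfl

theorem existsUnique_mapMatrix_comp_universalRep {B : Type*} [CommRing B] [Algebra k B]
    (ψ : A →ₐ[k] Matrix m m B) :
    ∃! φ : CoordRing k A m →ₐ[k] B, φ.mapMatrix.comp (universalRep k A m) = ψ := by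
  set ev : MvPolynomial (A × m × m) k →ₐ[k] B := aeval fun x => ψ x.1 x.2.1 x.2.2
  have hev : ideal k A m ≤ RingHom.ker ev := (ideal_le_ker_iff ev).mpr (mapMatrix_aeval_eq_zero_of_mem_relations ψ)
  refine ⟨Ideal.Quotient.liftₐ _ ev fun p hp => hev hp, ?_, fun φ hφ => ?_⟩
  · ext a i j
    exact aeval_X _ (a, i, j)
  · refine Ideal.Quotient.algHom_ext k (MvPolynomial.algHom_ext fun ⟨a, i, j⟩ => ?_)
    have h := congrFun₂ (AlgHom.congr_fun hφ a) i j
    rw [AlgHom.comp_apply, mapMatrix_universalRep_apply] at h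
    exact h.trans (aeval_X (fun x : A × m × m => ψ x.1 x.2.1 x.2.2) (a, i, j)).symm

end RepresentationScheme

end

theorem rep_functor_representable_general
    (k : Type u) [Field k] (A : Type u) [Ring A] [Algebra k A]
    (n : ℕ) :
    ∃ (R : CommAlgPkg k) (π : A →ₐ[k] Matrix (Fin n) (Fin n) R.carrier),
      ∀ (B : Type u) [CommRing B] [Algebra k B],
        Function.Bijective
          (fun φ : R.carrier →ₐ[k] B => (AlgHom.mapMatrix φ).comp π) :=
  ⟨⟨RepresentationScheme.CoordRing k A (Fin n)⟩, RepresentationScheme.universalRep k A (Fin n),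
    fun _ _ _ => (Function.bijective_iff_existsUnique _).mpr
      RepresentationScheme.existsUnique_mapMatrix_comp_universalRep⟩

theorem rep_functor_representable
    (k : Type u) [Field k] (A : Type u) [Ring A] [Algebra k A]
    (n : ℕ) (hn : 1 ≤ n) :
    ∃ (R : CommAlgPkg k) (π : A →ₐ[k] Matrix (Fin n) (Fin n) R.carrier),
      ∀ (B : Type u) [CommRing B] [Algebra k B],
        Function.Bijective
          (fun φ : R.carrier →ₐ[k] B => (AlgHom.mapMatrix φ).comp π) :=
  rep_functor_representable_general k A n
end

section
/- Let k be a field, A an associative unital k-algebra, n ≥ 1, C a commutative unital k-algebra and ρ : A → Mat_n(C) a unital k-algebra homomorphism. For every A-bimodule M there exist a C-module M_V and an A-bimodule homomorphism μ : M → Mat_n(M_V) such that for every C-module L and every A-bimodule homomorphism f : M → Mat_n(L), there exists a unique C-linear map g : M_V → L with Mat_n(g) ∘ μ = f. That is, the Van den Bergh functor M ↦ M_V is well defined: for each A-bimodule M the functor L ↦ Hom_{A-bimod}(M, Mat_n(L)) on C-modules is representable, with representing object M_V (concretely M_V = M ⊗_{A^e} Mat_n(C)). -/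
/-!
STATEMENT 9: The Van den Bergh functor is well defined: given `ρ : A → Mat_n(C)` with `C`
commutative, for every `A`-bimodule `M` there exist a `C`-module `M_V` and an `A`-bimodule
map `μ : M → Mat_n(M_V)` such that every `A`-bimodule map `f : M → Mat_n(L)` into matrices
over a `C`-module `L` factors as `f = Mat_n(g) ∘ μ` for a unique `C`-linear `g : M_V → L`.
Here `Mat_n(L)` is an `A`-bimodule via `a·X·b = ρ(a) X ρ(b)`.
-/

universe u

open MulOpposite

/-- Left action of a matrix over `C` on a matrix with entries in a `C`-module:
`(P · X)_{ij} = Σ_l P_{il} • X_{lj}`. -/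
def matLSmul {C N : Type*} [CommRing C] [AddCommGroup N] [Module C N] {n : ℕ}
    (P : Matrix (Fin n) (Fin n) C) (X : Matrix (Fin n) (Fin n) N) :
    Matrix (Fin n) (Fin n) N :=
  Matrix.of fun i j => ∑ l : Fin n, P i l • X l j

/-- Right action of a matrix over `C` on a matrix with entries in a `C`-module:
`(X · P)_{ij} = Σ_l P_{lj} • X_{il}`. -/
def matRSmul {C N : Type*} [CommRing C] [AddCommGroup N] [Module C N] {n : ℕ}
    (X : Matrix (Fin n) (Fin n) N) (P : Matrix (Fin n) (Fin n) C) :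
    Matrix (Fin n) (Fin n) N :=
  Matrix.of fun i j => ∑ l : Fin n, P l j • X i l

/-- A bundled module over the commutative `k`-algebra `C`. -/
structure ModPkg (k : Type u) [Field k] (C : Type u) [CommRing C] [Algebra k C] :
    Type (u + 1) where
  carrier : Type u
  [acgInst : AddCommGroup carrier]
  [modkInst : Module k carrier]
  [modCInst : Module C carrier]
  [towerInst : IsScalarTower k C carrier]

attribute [instance] ModPkg.acgInst ModPkg.modkInst ModPkg.modCInst ModPkg.towerInst

/-!
`M_V` is presented by generators `(m, i, j)`, standing for the `(i, j)` entry of `μ m`, subject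
to exactly the relations saying that `μ` is a `k`-linear bimodule map. A bimodule map
`f : M → Mat_n(L)` then sends the generator `(m, i, j)` to `f m i j`, which kills the relations
and so descends to `M_V`; uniqueness holds because the generators span `M_V`.
-/

noncomputable section

namespace VandenBergh

variable {k : Type*} [CommRing k] {A : Type*} [Ring A] [Algebra k A] {n : ℕ}
  {C : Type*} [CommRing C] [Algebra k C] (ρ : A →ₐ[k] Matrix (Fin n) (Fin n) C)
  (M : Type*) [AddCommGroup M] [Module k M] [Module A M] [Module Aᵐᵒᵖ M]

def relations : Submodule C (M × Fin n × Fin n →₀ C) :=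
  Submodule.span C
    ({x | ∃ (m m' : M) (i j : Fin n), x = Finsupp.single (m + m', i, j) 1
        - (Finsupp.single (m, i, j) 1 + Finsupp.single (m', i, j) 1)} ∪
     {x | ∃ (c : k) (m : M) (i j : Fin n), x = Finsupp.single (c • m, i, j) 1
        - algebraMap k C c • Finsupp.single (m, i, j) 1} ∪
     {x | ∃ (a : A) (m : M) (i j : Fin n), x = Finsupp.single (a • m, i, j) 1
        - ∑ l, ρ a i l • Finsupp.single (m, l, j) 1} ∪
     {x | ∃ (b : A) (m : M) (i j : Fin n), x = Finsupp.single (op b • m, i, j) 1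
        - ∑ l, ρ b l j • Finsupp.single (m, i, l) 1})

abbrev VdBMod : Type _ := (M × Fin n × Fin n →₀ C) ⧸ relations ρ M

variable {M}

def IsBimoduleHom {N : Type*} [AddCommGroup N] [Module C N]
    (f : M → Matrix (Fin n) (Fin n) N) : Prop :=
  (∀ (a : A) (m : M), f (a • m) = matLSmul (ρ a) (f m)) ∧
    ∀ (b : A) (m : M), f (op b • m) = matRSmul (f m) (ρ b)

def gen (m : M) (i j : Fin n) : VdBMod ρ M :=
  (relations ρ M).mkQ (Finsupp.single (m, i, j) 1)

theorem gen_add (m m' : M) (i j : Fin n) :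
    gen ρ (m + m') i j = gen ρ m i j + gen ρ m' i j :=
  (Submodule.Quotient.eq _).2 <|
    Submodule.subset_span <| Or.inl <| Or.inl <| Or.inl ⟨m, m', i, j, rfl⟩

theorem gen_smul (c : k) (m : M) (i j : Fin n) :
    gen ρ (c • m) i j = c • gen ρ m i j := by
  rw [← algebraMap_smul C c (gen ρ m i j), gen, gen, ← map_smul]
  exact (Submodule.Quotient.eq _).2 <|
    Submodule.subset_span <| Or.inl <| Or.inl <| Or.inr ⟨c, m, i, j, rfl⟩

theorem gen_smul_left (a : A) (m : M) (i j : Fin n) :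
    gen ρ (a • m) i j = ∑ l, ρ a i l • gen ρ m l j := by
  simp only [gen, ← map_smul, ← map_sum]
  exact (Submodule.Quotient.eq _).2 <|
    Submodule.subset_span <| Or.inl <| Or.inr ⟨a, m, i, j, rfl⟩

theorem gen_smul_right (b : A) (m : M) (i j : Fin n) :
    gen ρ (op b • m) i j = ∑ l, ρ b l j • gen ρ m i l := by
  simp only [gen, ← map_smul, ← map_sum]
  exact (Submodule.Quotient.eq _).2 <|
    Submodule.subset_span <| Or.inr ⟨b, m, i, j, rfl⟩

def unit : M →ₗ[k] Matrix (Fin n) (Fin n) (VdBMod ρ M) where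
  toFun m := Matrix.of (gen ρ m)
  map_add' m m' := by ext i j; exact gen_add ρ m m' i j
  map_smul' c m := by ext i j; exact gen_smul ρ c m i j

theorem isBimoduleHom_unit : IsBimoduleHom ρ (unit ρ : M →ₗ[k] _) :=
  ⟨fun a m => by ext i j; exact gen_smul_left ρ a m i j,
    fun b m => by ext i j; exact gen_smul_right ρ b m i j⟩

theorem hom_ext {L : Type*} [AddCommGroup L] [Module C L] {g g' : VdBMod ρ M →ₗ[C] L}
    (h : ∀ m i j, g (gen ρ m i j) = g' (gen ρ m i j)) : g = g' :=
  Submodule.linearMap_qext _ <| Finsupp.lhom_ext' fun _ => LinearMap.ext_ring (h _ _ _)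

section Lift

variable {L : Type*} [AddCommGroup L] [Module k L] [Module C L] [IsScalarTower k C L]
  (f : M →ₗ[k] Matrix (Fin n) (Fin n) L)

theorem relations_le_ker (hf : IsBimoduleHom ρ f) :
    relations ρ M ≤ LinearMap.ker (Finsupp.linearCombination C fun p : M × Fin n × Fin n ↦
      f p.1 p.2.1 p.2.2) := by
  rw [relations, Submodule.span_le]
  rintro x (((⟨m, m', i, j, rfl⟩ | ⟨c, m, i, j, rfl⟩) | ⟨a, m, i, j, rfl⟩) | ⟨b, m, i, j, rfl⟩) <;>
    simp only [SetLike.mem_coe, LinearMap.mem_ker, map_sub, map_add, map_smul, map_sum,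
      Finsupp.linearCombination_single, one_smul, sub_eq_zero]
  · rfl
  · rw [algebraMap_smul]; rfl
  · rw [hf.1]; rfl
  · rw [hf.2]; rfl

def lift (hf : IsBimoduleHom ρ f) : VdBMod ρ M →ₗ[C] L :=
  (relations ρ M).liftQ _ (relations_le_ker ρ f hf)

theorem lift_gen (hf : IsBimoduleHom ρ f) (m : M) (i j : Fin n) :
    lift ρ f hf (gen ρ m i j) = f m i j := by
  simp only [lift, gen, Submodule.mkQ_apply, Submodule.liftQ_apply,
    Finsupp.linearCombination_single, one_smul]

end Lift

end VandenBergh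

end

open VandenBergh in
theorem vandenBergh_functor_representable_general
    (k : Type u) [Field k] (A : Type u) [Ring A] [Algebra k A]
    (n : ℕ)
    (C : Type u) [CommRing C] [Algebra k C]
    (ρ : A →ₐ[k] Matrix (Fin n) (Fin n) C)
    (M : Type u) [AddCommGroup M] [Module k M]
    [Module A M] [Module Aᵐᵒᵖ M] :
    ∃ (MV : ModPkg k C) (μ : M →ₗ[k] Matrix (Fin n) (Fin n) MV.carrier),
      -- `μ` is an `A`-bimodule homomorphism `M → Mat_n(M_V)`
      (∀ (a : A) (m : M), μ (a • m) = matLSmul (ρ a) (μ m)) ∧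
      (∀ (b : A) (m : M), μ (op b • m) = matRSmul (μ m) (ρ b)) ∧
      -- universal property
      (∀ (L : Type u) [AddCommGroup L] [Module k L] [Module C L] [IsScalarTower k C L]
          (f : M →ₗ[k] Matrix (Fin n) (Fin n) L),
        (∀ (a : A) (m : M), f (a • m) = matLSmul (ρ a) (f m)) →
        (∀ (b : A) (m : M), f (op b • m) = matRSmul (f m) (ρ b)) →
        ∃! g : MV.carrier →ₗ[C] L, ∀ m : M, (μ m).map g = f m) := by
  refine ⟨⟨VdBMod ρ M⟩, unit ρ, (isBimoduleHom_unit ρ).1, (isBimoduleHom_unit ρ).2,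
    fun L _ _ _ _ f hl hr => ?_⟩
  have hf : IsBimoduleHom ρ f := ⟨hl, hr⟩
  refine ⟨lift ρ f hf, fun m => Matrix.ext (lift_gen ρ f hf m), fun g hg => ?_⟩
  exact hom_ext ρ fun m i j => (congr_fun₂ (hg m) i j).trans (lift_gen ρ f hf m i j).symm

theorem vandenBergh_functor_representable
    (k : Type u) [Field k] (A : Type u) [Ring A] [Algebra k A]
    (n : ℕ) (hn : 1 ≤ n)
    (C : Type u) [CommRing C] [Algebra k C]
    (ρ : A →ₐ[k] Matrix (Fin n) (Fin n) C)
    (M : Type u) [AddCommGroup M] [Module k M]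
    [Module A M] [Module Aᵐᵒᵖ M] [SMulCommClass A Aᵐᵒᵖ M]
    [IsScalarTower k A M] [IsScalarTower k Aᵐᵒᵖ M] :
    ∃ (MV : ModPkg k C) (μ : M →ₗ[k] Matrix (Fin n) (Fin n) MV.carrier),
      -- `μ` is an `A`-bimodule homomorphism `M → Mat_n(M_V)`
      (∀ (a : A) (m : M), μ (a • m) = matLSmul (ρ a) (μ m)) ∧
      (∀ (b : A) (m : M), μ (op b • m) = matRSmul (μ m) (ρ b)) ∧
      -- universal property
      (∀ (L : Type u) [AddCommGroup L] [Module k L] [Module C L] [IsScalarTower k C L]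
          (f : M →ₗ[k] Matrix (Fin n) (Fin n) L),
        (∀ (a : A) (m : M), f (a • m) = matLSmul (ρ a) (f m)) →
        (∀ (b : A) (m : M), f (op b • m) = matRSmul (f m) (ρ b)) →
        ∃! g : MV.carrier →ₗ[C] L, ∀ m : M, (μ m).map g = f m) :=
  vandenBergh_functor_representable_general k A n C ρ M
end

section
/- Let k be a field, A an associative unital k-algebra, n ≥ 1, and (A_V, π) a universal n-dimensional representation of A. Then for every A_V-module L, the map D ↦ Mat_n(D) ∘ π — sending a k-linear derivation D : A_V → L to the map a ↦ (D applied entrywise to π(a)) — is a bijection from the set of k-linear derivations of A_V into L onto the set of derivations of A into the A-bimodule Mat_n(L). This expresses the isomorphism (Ω¹_nc A)_V ≅ Ω¹_comm(A_V): the Van den Bergh functor takes the bimodule of noncommutative 1-forms of A to the module of Kähler differentials of A_V. -/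
/-!
A derivation `D : A_V → L` is the same as an algebra section `x ↦ (x, D x)` of the
projection `A_V ⋉ L → A_V` of the trivial square-zero extension, and a derivation
`θ : A → Mat_n(L)` over `π` is the same as an algebra map `a ↦ (π a, θ a)` into
`Mat_n(A_V ⋉ L) = Mat_n(A_V) ⋉ Mat_n(L)` lifting `π`. The universal property for
`B = A_V ⋉ L` turns such lifts into algebra maps `A_V → A_V ⋉ L`, and the one for `B = A_V`
shows that these maps are sections.
-/

universe u

open TrivSqZeroExt

section MatrixBimodule

variable {C N : Type*} [CommRing C] [AddCommGroup N] [Module C N] {n : ℕ}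

lemma matLSmul_one (X : Matrix (Fin n) (Fin n) N) :
    matLSmul (1 : Matrix (Fin n) (Fin n) C) X = X := by
  ext i j
  simp [matLSmul, Matrix.one_apply, ite_smul]

lemma matRSmul_one (X : Matrix (Fin n) (Fin n) N) :
    matRSmul X (1 : Matrix (Fin n) (Fin n) C) = X := by
  ext i j
  simp [matRSmul, Matrix.one_apply, ite_smul]

variable {k A : Type*} [CommRing k] [Semiring A] [Algebra k A] [Algebra k C] [Module k N]

def IsMatrixDerivation (ρ : A →ₐ[k] Matrix (Fin n) (Fin n) C)
    (θ : A →ₗ[k] Matrix (Fin n) (Fin n) N) : Prop :=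
  ∀ a b, θ (a * b) = matLSmul (ρ a) (θ b) + matRSmul (θ a) (ρ b)

lemma IsMatrixDerivation.map_one {ρ : A →ₐ[k] Matrix (Fin n) (Fin n) C}
    {θ : A →ₗ[k] Matrix (Fin n) (Fin n) N} (hθ : IsMatrixDerivation ρ θ) : θ 1 = 0 := by
  have h := hθ 1 1
  rw [mul_one, _root_.map_one ρ, matLSmul_one, matRSmul_one] at h
  exact left_eq_add.mp h

lemma Derivation.map_matrix_mul (D : Derivation k C N) (P Q : Matrix (Fin n) (Fin n) C) :
    (P * Q).map D = matLSmul P (Q.map D) + matRSmul (P.map D) Q := by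
  ext i j
  simp [Matrix.mul_apply, matLSmul, matRSmul, Finset.sum_add_distrib]

end MatrixBimodule

-- The symmetric bimodule structure, which makes `TrivSqZeroExt C N` a commutative ring; it is not
-- a global instance because for `N = C` it would clash with `Semiring.toOppositeModule`.
abbrev Module.oppositeOfComm (C N : Type*) [CommRing C] [AddCommGroup N] [Module C N] :
    Module Cᵐᵒᵖ N :=
  Module.compHom N ((RingHom.id C).fromOpposite mul_comm)

attribute [local instance] Module.oppositeOfComm

lemma Module.isCentralScalar_of_comm (C N : Type*) [CommRing C] [AddCommGroup N] [Module C N] :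
    IsCentralScalar C N :=
  ⟨fun _ _ => rfl⟩

attribute [local instance] Module.isCentralScalar_of_comm

namespace Matrix

variable {n : ℕ} {C N : Type*}

lemma ext_fst_snd {M M' : Matrix (Fin n) (Fin n) (TrivSqZeroExt C N)}
    (hfst : M.map fst = M'.map fst) (hsnd : M.map snd = M'.map snd) : M = M' := by
  ext i j
  · exact congrFun₂ hfst i j
  · exact congrFun₂ hsnd i j

variable [CommRing C] [AddCommGroup N]

def trivSqZeroExtMk (P : Matrix (Fin n) (Fin n) C) (X : Matrix (Fin n) (Fin n) N) :
    Matrix (Fin n) (Fin n) (TrivSqZeroExt C N) :=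
  of fun i j => inl (P i j) + inr (X i j)

@[simp]
lemma map_fst_trivSqZeroExtMk (P : Matrix (Fin n) (Fin n) C) (X : Matrix (Fin n) (Fin n) N) :
    (trivSqZeroExtMk P X).map fst = P := by
  ext i j
  simp [trivSqZeroExtMk]

@[simp]
lemma map_snd_trivSqZeroExtMk (P : Matrix (Fin n) (Fin n) C) (X : Matrix (Fin n) (Fin n) N) :
    (trivSqZeroExtMk P X).map snd = X := by
  ext i j
  simp [trivSqZeroExtMk]

@[simp]
lemma map_fst_one : (1 : Matrix (Fin n) (Fin n) (TrivSqZeroExt C N)).map fst = 1 :=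
  Matrix.map_one _ fst_zero fst_one

@[simp]
lemma map_snd_one : (1 : Matrix (Fin n) (Fin n) (TrivSqZeroExt C N)).map snd = 0 := by
  ext i j
  simp [one_apply, apply_ite]

lemma trivSqZeroExtMk_injective_right (P : Matrix (Fin n) (Fin n) C) :
    Function.Injective (trivSqZeroExtMk (N := N) P) := fun X Y h => by
  simpa using congrArg (map · snd) h

variable [Module C N]

lemma map_fst_mul (M M' : Matrix (Fin n) (Fin n) (TrivSqZeroExt C N)) :
    (M * M').map fst = M.map fst * M'.map fst := by
  ext i j
  simp [mul_apply, fst_sum]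

lemma map_snd_mul (M M' : Matrix (Fin n) (Fin n) (TrivSqZeroExt C N)) :
    (M * M').map snd =
      matLSmul (M.map fst) (M'.map snd) + matRSmul (M.map snd) (M'.map fst) := by
  ext i j
  simp [mul_apply, snd_sum, matLSmul, matRSmul, Finset.sum_add_distrib]

end Matrix

section TrivSqZeroExt

variable {k C N A : Type*} [CommRing k] [CommRing C] [Algebra k C]
  [AddCommGroup N] [Module C N] [Module k N] [IsScalarTower k C N]
  [Semiring A] [Algebra k A] {n : ℕ}

def liftMatrixDerivation {ρ : A →ₐ[k] Matrix (Fin n) (Fin n) C}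
    {θ : A →ₗ[k] Matrix (Fin n) (Fin n) N} (hθ : IsMatrixDerivation ρ θ) :
    A →ₐ[k] Matrix (Fin n) (Fin n) (TrivSqZeroExt C N) :=
  AlgHom.ofLinearMap
    { toFun a := Matrix.trivSqZeroExtMk (ρ a) (θ a)
      map_add' a b := by ext i j <;> simp [Matrix.trivSqZeroExtMk, add_add_add_comm]
      map_smul' c a := by ext i j <;> simp [Matrix.trivSqZeroExtMk] }
    (Matrix.ext_fst_snd (by simp) (by simp [hθ.map_one]))
    (fun a b => Matrix.ext_fst_snd (by simp [Matrix.map_fst_mul])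
      (by simp [Matrix.map_snd_mul, hθ a b]))

lemma liftMatrixDerivation_apply {ρ : A →ₐ[k] Matrix (Fin n) (Fin n) C}
    {θ : A →ₗ[k] Matrix (Fin n) (Fin n) N} (hθ : IsMatrixDerivation ρ θ) (a : A) :
    liftMatrixDerivation hθ a = Matrix.trivSqZeroExtMk (ρ a) (θ a) :=
  rfl

lemma mapMatrix_fstHom_comp_liftMatrixDerivation {ρ : A →ₐ[k] Matrix (Fin n) (Fin n) C}
    {θ : A →ₗ[k] Matrix (Fin n) (Fin n) N} (hθ : IsMatrixDerivation ρ θ) :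
    (fstHom k C N).mapMatrix.comp (liftMatrixDerivation hθ) = ρ := by
  ext a : 1
  exact Matrix.map_fst_trivSqZeroExtMk (ρ a) (θ a)

namespace Derivation

def toTrivSqZeroExt (D : Derivation k C N) : C →ₐ[k] TrivSqZeroExt C N where
  toFun x := inl x + inr (D x)
  map_one' := by simp
  map_mul' x y := by ext <;> simp [D.leibniz]
  map_zero' := by simp
  map_add' x y := by ext <;> simp [add_add_add_comm]
  commutes' c := by ext <;> simp [algebraMap_eq_inl']

@[simp]
lemma fst_toTrivSqZeroExt (D : Derivation k C N) (x : C) : (D.toTrivSqZeroExt x).fst = x := by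
  simp [toTrivSqZeroExt]

@[simp]
lemma snd_toTrivSqZeroExt (D : Derivation k C N) (x : C) : (D.toTrivSqZeroExt x).snd = D x := by
  simp [toTrivSqZeroExt]

lemma toTrivSqZeroExt_injective :
    Function.Injective (toTrivSqZeroExt : Derivation k C N → C →ₐ[k] TrivSqZeroExt C N) := by
  intro D D' h
  ext x
  simpa using congrArg snd (DFunLike.congr_fun h x)

lemma exists_toTrivSqZeroExt_eq {φ : C →ₐ[k] TrivSqZeroExt C N}
    (hφ : (fstHom k C N).comp φ = AlgHom.id k C) :
    ∃ D : Derivation k C N, D.toTrivSqZeroExt = φ := by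
  have hfst (x : C) : (φ x).fst = x := DFunLike.congr_fun hφ x
  refine ⟨{ toLinearMap := (sndHom C N).restrictScalars k ∘ₗ φ.toLinearMap
            map_one_eq_zero' := by simp
            leibniz' := fun x y => by simp [hfst] }, ?_⟩
  ext x <;> simp [hfst]

lemma map_toTrivSqZeroExt (D : Derivation k C N) (P : Matrix (Fin n) (Fin n) C) :
    P.map D.toTrivSqZeroExt = Matrix.trivSqZeroExtMk P (P.map D) :=
  Matrix.ext_fst_snd (by rw [Matrix.map_fst_trivSqZeroExtMk]; ext; simp)
    (by rw [Matrix.map_snd_trivSqZeroExtMk]; ext; simp)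

lemma mapMatrix_toTrivSqZeroExt_comp_eq_liftMatrixDerivation_iff (D : Derivation k C N)
    {ρ : A →ₐ[k] Matrix (Fin n) (Fin n) C} {θ : A →ₗ[k] Matrix (Fin n) (Fin n) N}
    (hθ : IsMatrixDerivation ρ θ) :
    D.toTrivSqZeroExt.mapMatrix.comp ρ = liftMatrixDerivation hθ ↔
      ∀ a, (ρ a).map D = θ a := by
  simp only [AlgHom.ext_iff, AlgHom.comp_apply, AlgHom.mapMatrix_apply, map_toTrivSqZeroExt,
    liftMatrixDerivation_apply, (Matrix.trivSqZeroExtMk_injective_right _).eq_iff]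

end Derivation

end TrivSqZeroExt

theorem kaehler_differentials_of_representation_scheme_general
    (k : Type u) [Field k] (A : Type u) [Ring A] [Algebra k A]
    (n : ℕ)
    (AV : Type u) [CommRing AV] [Algebra k AV]
    (π : A →ₐ[k] Matrix (Fin n) (Fin n) AV)
    -- `(AV, π)` is a universal n-dimensional representation of `A`:
    (huniv : ∀ (B : Type u) [CommRing B] [Algebra k B],
      Function.Bijective (fun φ : AV →ₐ[k] B => (AlgHom.mapMatrix φ).comp π))
    (L : Type u) [AddCommGroup L] [Module k L] [Module AV L] [IsScalarTower k AV L] :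
    -- for every derivation `D : A_V → L`, the map `a ↦ Mat_n(D)(π a)` is a derivation
    -- of `A` into `Mat_n(L)` ...
    (∀ (D : Derivation k AV L) (a b : A),
      (π (a * b)).map ⇑D
        = matLSmul (π a) ((π b).map ⇑D) + matRSmul ((π a).map ⇑D) (π b)) ∧
    -- ... and `D ↦ Mat_n(D) ∘ π` is a bijection onto the set of such derivations
    (∀ θ : A →ₗ[k] Matrix (Fin n) (Fin n) L,
      (∀ a b : A, θ (a * b) = matLSmul (π a) (θ b) + matRSmul (θ a) (π b)) →
      ∃! D : Derivation k AV L, ∀ a : A, (π a).map ⇑D = θ a) := by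
  refine ⟨fun D a b => by rw [map_mul, D.map_matrix_mul],
    fun θ (hθ : IsMatrixDerivation π θ) => ?_⟩
  obtain ⟨φ, hφ⟩ := (huniv (TrivSqZeroExt AV L)).2 (liftMatrixDerivation hθ)
  dsimp only at hφ
  have hsection : (fstHom k AV L).comp φ = AlgHom.id k AV := (huniv AV).1 <| by
    dsimp only
    rw [← AlgHom.mapMatrix_comp, AlgHom.comp_assoc, hφ,
      mapMatrix_fstHom_comp_liftMatrixDerivation, AlgHom.mapMatrix_id, AlgHom.id_comp]
  obtain ⟨D, rfl⟩ := Derivation.exists_toTrivSqZeroExt_eq hsection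
  have hmatch (E : Derivation k AV L) :=
    E.mapMatrix_toTrivSqZeroExt_comp_eq_liftMatrixDerivation_iff hθ
  refine ⟨D, (hmatch D).1 hφ, fun D' hD' => Derivation.toTrivSqZeroExt_injective ?_⟩
  exact (huniv _).1 (((hmatch D').2 hD').trans hφ.symm)

theorem kaehler_differentials_of_representation_scheme
    (k : Type u) [Field k] (A : Type u) [Ring A] [Algebra k A]
    (n : ℕ) (hn : 1 ≤ n)
    (AV : Type u) [CommRing AV] [Algebra k AV]
    (π : A →ₐ[k] Matrix (Fin n) (Fin n) AV)
    -- `(AV, π)` is a universal n-dimensional representation of `A`: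
    (huniv : ∀ (B : Type u) [CommRing B] [Algebra k B],
      Function.Bijective (fun φ : AV →ₐ[k] B => (AlgHom.mapMatrix φ).comp π))
    (L : Type u) [AddCommGroup L] [Module k L] [Module AV L] [IsScalarTower k AV L] :
    -- for every derivation `D : A_V → L`, the map `a ↦ Mat_n(D)(π a)` is a derivation
    -- of `A` into `Mat_n(L)` ...
    (∀ (D : Derivation k AV L) (a b : A),
      (π (a * b)).map ⇑D
        = matLSmul (π a) ((π b).map ⇑D) + matRSmul ((π a).map ⇑D) (π b)) ∧
    -- ... and `D ↦ Mat_n(D) ∘ π` is a bijection onto the set of such derivations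
    (∀ θ : A →ₗ[k] Matrix (Fin n) (Fin n) L,
      (∀ a b : A, θ (a * b) = matLSmul (π a) (θ b) + matRSmul (θ a) (π b)) →
      ∃! D : Derivation k AV L, ∀ a : A, (π a).map ⇑D = θ a) :=
  kaehler_differentials_of_representation_scheme_general k A n AV π huniv L
end
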